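/- Let T be an invertible real d × d matrix. Then the lattice T(ℤ^d) is admissible if and only if its dual lattice (T^{-1})^⊤(ℤ^d) is admissible. -/

import Mathlib

open Matrix
open Finset

/-- The lattice `T(ℤ^d)` generated by an invertible real matrix `T` is admissible if
`inf { ∏_i |x_i| : x ∈ T(ℤ^d) \ {0} } > 0`. -/
def Admissible {d : ℕ} (T : Matrix (Fin d) (Fin d) ℝ) : Prop :=
  ∃ δ > 0, ∀ k : Fin d → ℤ, k ≠ 0 → δ ≤ ∏ i, |T.mulVec (fun j => (k j : ℝ)) i|

noncomputable def R0 (d : ℕ) (η γ : ℝ) : ℝ :=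
  η / d + 2 * 4 ^ (2 * d - 1) * γ / (η / d) ^ (d - 1)

noncomputable def eps0 (d : ℕ) (η γ : ℝ) : ℝ := 1 / (4 * d * R0 d η γ)

lemma sub_lt_of_floor_div_eq {a b c : ℝ} (hc : 0 < c) (h : ⌊a / c⌋ = ⌊b / c⌋) :
    a - b < c := by
  have h1 : a / c < ⌊b / c⌋ + 1 := h ▸ Int.lt_floor_add_one (a / c)
  have h2 : (⌊b / c⌋ : ℝ) ≤ b / c := Int.floor_le _
  have h3 : (a - b) / c < 1 := by rw [sub_div]; linarith
  linarith [(div_lt_one hc).1 h3]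

lemma abs_sub_lt_of_floor_div_eq {a b c : ℝ} (hc : 0 < c) (h : ⌊a / c⌋ = ⌊b / c⌋) :
    |a - b| < c :=
  abs_sub_lt_iff.2 ⟨sub_lt_of_floor_div_eq hc h, sub_lt_of_floor_div_eq hc h.symm⟩

set_option maxHeartbeats 1000000 in
lemma core (e : ℕ) (δ η : ℝ) (hη : 0 < η) (hηδ : η ^ (e + 1) ≤ δ)
    (C : Fin (e + 1) → ℝ) (hC : ∀ i, 0 < C i)
    (G : (Fin (e + 1) → ℤ) → (Fin (e + 1) → ℝ))
    (hGsub : ∀ a b, G (a - b) = G a - G b)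
    (hGbound : ∀ (m : Fin (e + 1) → ℤ) (M : ℝ), 0 ≤ M → (∀ j, |(m j : ℝ)| ≤ M) →
      ∀ i, |G m i| ≤ C i * M)
    (hsep : ∀ m : Fin (e + 1) → ℤ, m ≠ 0 → δ ≤ ∏ i, |G m i|)
    (z : Fin (e + 1) → ℝ) (j : Fin (e + 1))
    (hjmax : ∀ i, |z i| ≤ |z j|) (hjpos : 0 < |z j|)
    (hz : ∀ i, |z i| < eps0 (e + 1) η (∏ i, C i))
    (hpair : ∀ m : Fin (e + 1) → ℤ, ∃ p : ℤ, ∑ i, G m i * z i = (p : ℝ)) :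
    False := by
  have hδ : 0 < δ := lt_of_lt_of_le (pow_pos hη _) hηδ
  set γ := ∏ i, C i with hγ
  have hγpos : 0 < γ := Finset.prod_pos fun i _ => hC i
  have hdc : (0 : ℝ) < ((e + 1 : ℕ) : ℝ) := by positivity
  set η' := η / ((e + 1 : ℕ) : ℝ) with hη'def
  have hη'pos : 0 < η' := div_pos hη hdc
  set R := R0 (e + 1) η γ with hRdef
  have hR0 : R = η' + 2 * 4 ^ (2 * e + 1) * γ / η' ^ e := by
    have h1 : 2 * (e + 1) - 1 = 2 * e + 1 := by omega
    have h2 : (e + 1) - 1 = e := by omega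
    rw [hRdef, R0, h1, h2]
  have hterm : 0 < 2 * 4 ^ (2 * e + 1) * γ / η' ^ e := by positivity
  have hRη' : η' ≤ R := by rw [hR0]; linarith
  have hRpos : 0 < R := lt_of_lt_of_le hη'pos hRη'
  have hRbig : 2 * 4 ^ (2 * e + 1) * γ / η' ^ e ≤ R := by rw [hR0]; linarith
  set ε := eps0 (e + 1) η γ with hεdef
  have hε : ε = 1 / (4 * ((e + 1 : ℕ) : ℝ) * R) := by rw [hεdef, eps0, hRdef]
  have hεpos : 0 < ε := by rw [hε]; positivity
  set n : ℕ := ⌊2 * R / η'⌋₊ + 2 with hn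
  have hn1 : (1 : ℝ) ≤ (n : ℝ) := by
    have : 1 ≤ n := by omega
    exact_mod_cast this
  have hnR : (n : ℝ) ≤ 4 * R / η' := by
    have h1 : (⌊2 * R / η'⌋₊ : ℝ) ≤ 2 * R / η' := Nat.floor_le (by positivity)
    have h2 : (2 : ℝ) ≤ 2 * R / η' := by
      rw [le_div_iff₀ hη'pos]; linarith
    have : (n : ℝ) = (⌊2 * R / η'⌋₊ : ℝ) + 2 := by rw [hn]; push_cast; ring
    rw [this]
    have h3 : 4 * R / η' = 2 * R / η' + 2 * R / η' := by ring
    linarith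
  have hRn : R / η' < (⌊2 * R / η'⌋₊ : ℝ) + 1 := by
    have h1 := Nat.lt_floor_add_one (2 * R / η')
    have h2 : R / η' ≤ 2 * R / η' := by
      have : 0 ≤ R / η' := by positivity
      rw [mul_div_assoc]; linarith
    linarith
  have hRn2 : R / η' + 1 < (n : ℝ) := by
    have hcast : (n : ℝ) = (⌊2 * R / η'⌋₊ : ℝ) + 2 := by rw [hn]; push_cast; ring
    linarith
  clear_value n
  clear hn
  set N : ℕ := (Finset.univ.sup fun i => ⌈R / C i⌉₊) + 1 with hN
  have hNC : ∀ i, R / C i ≤ (N : ℝ) := by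
    intro i
    have h1 : (⌈R / C i⌉₊ : ℕ) ≤ Finset.univ.sup fun i => ⌈R / C i⌉₊ :=
      Finset.le_sup (f := fun i => ⌈R / C i⌉₊) (mem_univ i)
    calc R / C i ≤ (⌈R / C i⌉₊ : ℝ) := Nat.le_ceil _
      _ ≤ ((Finset.univ.sup fun i => ⌈R / C i⌉₊ : ℕ) : ℝ) := by exact_mod_cast h1
      _ ≤ (N : ℝ) := by rw [hN]; push_cast; linarith
  have hCN : ∀ i, R ≤ C i * N := by
    intro i
    have h := hNC i
    rw [div_le_iff₀ (hC i)] at h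
    linarith
  have hNpos : (0 : ℝ) < (N : ℝ) := by
    have : 0 < N := by omega
    exact_mod_cast this
  clear_value N
  clear hN
  set S : Finset (Fin (e + 1) → ℤ) := Fintype.piFinset fun _ => Finset.Icc (0 : ℤ) (N : ℤ)
    with hS
  have hScard : S.card = (N + 1) ^ (e + 1) := by
    have h1 : (Finset.Icc (0 : ℤ) (N : ℤ)).card = N + 1 := by
      rw [Int.card_Icc]; omega
    rw [hS, Fintype.card_piFinset]
    simp [h1]
  set Φ : (Fin (e + 1) → ℤ) → (Fin (e + 1) → ℤ) := fun m i => ⌊G m i / R⌋ with hΦ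
  set lo1 : Fin (e + 1) → ℤ := fun i => ⌊-(C i * N) / R⌋ with hlo1
  set hi1 : Fin (e + 1) → ℤ := fun i => ⌊C i * N / R⌋ with hhi1
  set B1 := Fintype.piFinset fun i => Finset.Icc (lo1 i) (hi1 i) with hB1
  have hmem : ∀ m ∈ S, ∀ i, |G m i| ≤ C i * N := by
    intro m hm i
    refine hGbound m N (Nat.cast_nonneg N) (fun jj => ?_) i
    rw [hS, Fintype.mem_piFinset] at hm
    have h := hm jj
    rw [Finset.mem_Icc] at h
    rw [abs_le]
    constructor
    · have : (0 : ℝ) ≤ (m jj : ℝ) := by exact_mod_cast h.1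
      linarith
    · exact_mod_cast h.2
  have hlohi : ∀ i, -(C i * N) / R ≤ C i * N / R := by
    intro i
    have h1 : (0 : ℝ) ≤ C i * N := mul_nonneg (hC i).le (Nat.cast_nonneg N)
    apply div_le_div_of_nonneg_right ?_ hRpos.le
    linarith
  have hmaps1 : ∀ m ∈ S, Φ m ∈ B1 := by
    intro m hm
    rw [hB1, Fintype.mem_piFinset]
    intro i
    rw [Finset.mem_Icc, hΦ]
    have h := abs_le.1 (hmem m hm i)
    constructor
    · exact Int.floor_le_floor (by
        apply div_le_div_of_nonneg_right ?_ hRpos.le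
        linarith [h.1])
    · exact Int.floor_le_floor (by
        apply div_le_div_of_nonneg_right ?_ hRpos.le
        linarith [h.2])
  have hB1ne : B1.Nonempty := by
    refine ⟨fun i => lo1 i, ?_⟩
    rw [hB1, Fintype.mem_piFinset]
    intro i
    rw [Finset.mem_Icc]
    exact ⟨le_refl _, Int.floor_le_floor (hlohi i)⟩
  have hB1card : (B1.card : ℝ) ≤ (4 * N / R) ^ (e + 1) * γ := by
    rw [hB1, Fintype.card_piFinset]
    push_cast
    have hfac : ∀ i, ((Finset.Icc (lo1 i) (hi1 i)).card : ℝ) ≤ 4 * C i * N / R := by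
      intro i
      have hle : lo1 i ≤ hi1 i := Int.floor_le_floor (hlohi i)
      have hcard : ((Finset.Icc (lo1 i) (hi1 i)).card : ℝ) = (hi1 i : ℝ) - (lo1 i : ℝ) + 1 := by
        rw [Int.card_Icc]
        have h0 : (0:ℤ) ≤ hi1 i + 1 - lo1 i := by omega
        have hTN := Int.toNat_of_nonneg h0
        have hcast : (((hi1 i + 1 - lo1 i).toNat : ℤ) : ℝ) = ((hi1 i + 1 - lo1 i : ℤ) : ℝ) := by
          rw [hTN]
        push_cast at hcast ⊢
        linarith [hcast]
      rw [hcard]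
      have h1 : (hi1 i : ℝ) ≤ C i * N / R := Int.floor_le _
      have h2 : -(C i * N) / R - 1 < (lo1 i : ℝ) := Int.sub_one_lt_floor _
      have h3 : (1 : ℝ) ≤ C i * N / R := (one_le_div hRpos).2 (hCN i)
      have h4 : -(C i * N) / R = -(C i * N / R) := by ring
      have h5 : 4 * C i * N / R = 4 * (C i * N / R) := by ring
      rw [h5]
      linarith
    calc (∏ i, ((Finset.Icc (lo1 i) (hi1 i)).card : ℝ))
        ≤ ∏ i, (4 * C i * N / R) :=
          Finset.prod_le_prod (fun i _ => by positivity) (fun i _ => hfac i)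
      _ = ∏ i, ((4 * N / R) * C i) := Finset.prod_congr rfl (fun i _ => by ring)
      _ = (4 * N / R) ^ (e + 1) * γ := by
          rw [Finset.prod_mul_distrib, Finset.prod_const, Finset.card_univ, Fintype.card_fin,
            hγ]
  have hkey1 : (4 * N / R) ^ (e + 1) * γ * (2 * (n : ℝ) ^ e) ≤ (N : ℝ) ^ (e + 1) := by
    have hna : (n : ℝ) ^ e ≤ (4 * R / η') ^ e := pow_le_pow_left₀ (by positivity) hnR e
    calc (4 * N / R) ^ (e + 1) * γ * (2 * (n : ℝ) ^ e)
        ≤ (4 * N / R) ^ (e + 1) * γ * (2 * (4 * R / η') ^ e) := by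
          apply mul_le_mul_of_nonneg_left (by linarith) (by positivity)
      _ = (N : ℝ) ^ (e + 1) * ((2 * 4 ^ (2 * e + 1) * γ / η' ^ e) / R) := by
          rw [div_pow, div_pow, div_pow]
          field_simp
          ring
      _ ≤ (N : ℝ) ^ (e + 1) * 1 := by
          apply mul_le_mul_of_nonneg_left ((div_le_one hRpos).2 hRbig) (by positivity)
      _ = (N : ℝ) ^ (e + 1) := mul_one _
  have hcard1 : B1.card * (n ^ e + 1) ≤ S.card := by
    have h2 : (n : ℝ) ^ e + 1 ≤ 2 * (n : ℝ) ^ e := by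
      have : (1 : ℝ) ≤ (n : ℝ) ^ e := one_le_pow₀ hn1
      linarith
    have h1 : ((B1.card * (n ^ e + 1) : ℕ) : ℝ) ≤ ((N : ℝ)) ^ (e + 1) := by
      push_cast
      calc (B1.card : ℝ) * ((n : ℝ) ^ e + 1)
          ≤ ((4 * N / R) ^ (e + 1) * γ) * (2 * (n : ℝ) ^ e) := by
            apply mul_le_mul hB1card h2 (by positivity) ?_
            have := hγpos
            positivity
        _ ≤ (N : ℝ) ^ (e + 1) := hkey1
    have h3 : ((N : ℝ)) ^ (e + 1) ≤ (((N + 1 : ℕ) : ℝ)) ^ (e + 1) := by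
      apply pow_le_pow_left₀ (by positivity)
      push_cast
      linarith
    rw [hScard]
    exact_mod_cast h1.trans h3
  obtain ⟨b, hbB, hbcard⟩ :=
    Finset.exists_le_card_fiber_of_mul_le_card_of_maps_to hmaps1 hB1ne hcard1
  set S' := {x ∈ S | Φ x = b} with hS'
  set lo2 : Fin (e + 1) → ℤ := fun i => ⌊((b i : ℝ) * R) / η'⌋ with hlo2
  set Ψ : (Fin (e + 1) → ℤ) → (Fin (e + 1) → ℤ) :=
    fun m i => if i = j then 0 else ⌊G m i / η'⌋ with hΨ
  set B2 := Fintype.piFinset fun i =>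
    if i = j then ({0} : Finset ℤ) else Finset.Icc (lo2 i) (lo2 i + n - 1) with hB2
  have hGmem : ∀ m ∈ S', ∀ i, (b i : ℝ) * R ≤ G m i ∧ G m i < (b i : ℝ) * R + R := by
    intro m hm i
    rw [hS', Finset.mem_filter] at hm
    have hfl : ⌊G m i / R⌋ = b i := congr_fun hm.2 i
    have h1 : (b i : ℝ) ≤ G m i / R := by rw [← hfl]; exact Int.floor_le _
    have h2 : G m i / R < (b i : ℝ) + 1 := by rw [← hfl]; exact Int.lt_floor_add_one _
    have hGR : G m i = (G m i / R) * R := by field_simp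
    constructor
    · calc (b i : ℝ) * R ≤ (G m i / R) * R := mul_le_mul_of_nonneg_right h1 hRpos.le
        _ = G m i := hGR.symm
    · calc G m i = (G m i / R) * R := hGR
        _ < ((b i : ℝ) + 1) * R := mul_lt_mul_of_pos_right h2 hRpos
        _ = (b i : ℝ) * R + R := by ring
  have hmaps2 : ∀ m ∈ S', Ψ m ∈ B2 := by
    intro m hm
    rw [hB2, Fintype.mem_piFinset]
    intro i
    by_cases hij : i = j
    · simp [hΨ, hij]
    · simp only [hΨ, if_neg hij]
      rw [Finset.mem_Icc]
      obtain ⟨h1, h2⟩ := hGmem m hm i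
      constructor
      · apply Int.floor_le_floor
        apply div_le_div_of_nonneg_right h1 hη'pos.le
      · have h3 : (⌊G m i / η'⌋ : ℝ) < (lo2 i : ℝ) + n := by
          have hfl1 : ((b i : ℝ) * R) / η' < (lo2 i : ℝ) + 1 := Int.lt_floor_add_one _
          calc (⌊G m i / η'⌋ : ℝ) ≤ G m i / η' := Int.floor_le _
            _ < ((b i : ℝ) * R + R) / η' := by
                exact (div_lt_div_iff_of_pos_right hη'pos).2 h2
            _ = ((b i : ℝ) * R) / η' + R / η' := by ring
            _ < (lo2 i : ℝ) + n := by linarith [hRn2]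
        have h4 : ⌊G m i / η'⌋ < lo2 i + n := by exact_mod_cast h3
        omega
  have hB2card : B2.card < S'.card := by
    have hc2 : B2.card = n ^ e := by
      rw [hB2, Fintype.card_piFinset]
      have hstep : ∀ i : Fin (e + 1),
          ((if i = j then ({0} : Finset ℤ) else Finset.Icc (lo2 i) (lo2 i + n - 1)).card)
          = if i = j then 1 else n := by
        intro i
        by_cases hij : i = j
        · simp [hij]
        · rw [if_neg hij, if_neg hij, Int.card_Icc]
          omega
      rw [Finset.prod_congr rfl fun i _ => hstep i]
      rw [← Finset.mul_prod_erase univ _ (mem_univ j), if_pos rfl, one_mul]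
      rw [Finset.prod_congr rfl fun i hi => if_neg (Finset.ne_of_mem_erase hi)]
      rw [Finset.prod_const, Finset.card_erase_of_mem (mem_univ j), Finset.card_univ,
        Fintype.card_fin]
      norm_num
    rw [hc2]
    omega
  obtain ⟨m, hm, m', hm', hmm', hΨeq⟩ :=
    Finset.exists_ne_map_eq_of_card_lt_of_maps_to hB2card hmaps2
  set w : Fin (e + 1) → ℝ := fun i => G m i - G m' i with hw
  have hwG : ∀ i, G (m - m') i = w i := by
    intro i; rw [hGsub]; rfl
  have hwR : ∀ i, |w i| < R := by
    intro i
    obtain ⟨h1, h2⟩ := hGmem m hm i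
    obtain ⟨h3, h4⟩ := hGmem m' hm' i
    rw [hw, abs_sub_lt_iff]
    constructor <;> linarith
  have hwη' : ∀ i, i ≠ j → |w i| < η' := by
    intro i hij
    have heq := congr_fun hΨeq i
    simp only [hΨ, if_neg hij] at heq
    exact abs_sub_lt_of_floor_div_eq hη'pos heq
  have hpz : ∑ i, w i * z i = 0 := by
    obtain ⟨p, hp⟩ := hpair (m - m')
    rw [Finset.sum_congr rfl fun i _ => by rw [hwG i]] at hp
    have habs : |∑ i, w i * z i| < 1 := by
      calc |∑ i, w i * z i| ≤ ∑ i, |w i * z i| := Finset.abs_sum_le_sum_abs _ _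
        _ ≤ ∑ _i : Fin (e + 1), R * ε := by
            apply Finset.sum_le_sum
            intro i _
            rw [abs_mul]
            exact mul_le_mul (hwR i).le (hz i).le (abs_nonneg _) hRpos.le
        _ = ((e + 1 : ℕ) : ℝ) * (R * ε) := by
            rw [Finset.sum_const, Finset.card_univ, Fintype.card_fin, nsmul_eq_mul]
        _ = 1 / 4 := by
            rw [hε]
            have hne : ((e + 1 : ℕ) : ℝ) ≠ 0 := hdc.ne'
            field_simp
        _ < 1 := by norm_num
    have hp0 : p = 0 := by
      by_contra hp0
      have h1 : (1 : ℝ) ≤ |(p : ℝ)| := by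
        have := Int.one_le_abs hp0
        exact_mod_cast this
      rw [hp] at habs
      linarith
    rw [hp, hp0, Int.cast_zero]
  have hwj : |w j| ≤ (e : ℝ) * η' := by
    have hsum := Finset.add_sum_erase univ (fun i => w i * z i) (mem_univ j)
    rw [hpz] at hsum
    have hsplit : w j * z j = -∑ i ∈ univ.erase j, w i * z i := by linarith
    have habs2 : |w j| * |z j| ≤ ((e : ℝ) * η') * |z j| := by
      calc |w j| * |z j| = |w j * z j| := (abs_mul _ _).symm
        _ = |∑ i ∈ univ.erase j, w i * z i| := by rw [hsplit, abs_neg]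
        _ ≤ ∑ i ∈ univ.erase j, |w i * z i| := Finset.abs_sum_le_sum_abs _ _
        _ ≤ ∑ _i ∈ univ.erase j, η' * |z j| := by
            apply Finset.sum_le_sum
            intro i hi
            rw [abs_mul]
            exact mul_le_mul (hwη' i (Finset.ne_of_mem_erase hi)).le (hjmax i)
              (abs_nonneg _) hη'pos.le
        _ = ((e : ℝ) * η') * |z j| := by
            rw [Finset.sum_const, Finset.card_erase_of_mem (mem_univ j), Finset.card_univ,
              Fintype.card_fin, nsmul_eq_mul]
            norm_num
            ring
    exact le_of_mul_le_mul_right habs2 hjpos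
  have hu : m - m' ≠ 0 := sub_ne_zero.2 hmm'
  have hlow : δ ≤ ∏ i, |w i| := by
    calc δ ≤ ∏ i, |G (m - m') i| := hsep (m - m') hu
      _ = ∏ i, |w i| := Finset.prod_congr rfl fun i _ => by rw [hwG i]
  have herased : ∏ i ∈ univ.erase j, |w i| ≤ η' ^ e := by
    calc ∏ i ∈ univ.erase j, |w i| ≤ ∏ _i ∈ univ.erase j, η' :=
          Finset.prod_le_prod (fun _ _ => abs_nonneg _)
            (fun i hi => (hwη' i (Finset.ne_of_mem_erase hi)).le)
      _ = η' ^ e := by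
          rw [Finset.prod_const, Finset.card_erase_of_mem (mem_univ j), Finset.card_univ,
            Fintype.card_fin]
          norm_num
  have hupp : ∏ i, |w i| ≤ ((e : ℝ) * η') * η' ^ e := by
    rw [← Finset.mul_prod_erase univ _ (mem_univ j)]
    apply mul_le_mul hwj herased (Finset.prod_nonneg fun _ _ => abs_nonneg _) ?_
    positivity
  have hstrict : (e : ℝ) * η' * η' ^ e < η ^ (e + 1) := by
    have h1 : η' ^ (e + 1) = η ^ (e + 1) / ((e + 1 : ℕ) : ℝ) ^ (e + 1) := by
      rw [hη'def, div_pow]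
    have h2 : (e : ℝ) < ((e + 1 : ℕ) : ℝ) ^ (e + 1) := by
      have hnat : e < (e + 1) ^ (e + 1) := by
        calc e < e + 1 := Nat.lt_succ_self e
          _ ≤ (e + 1) ^ (e + 1) := Nat.le_self_pow (Nat.succ_ne_zero e) _
      exact_mod_cast hnat
    calc (e : ℝ) * η' * η' ^ e = (e : ℝ) * η' ^ (e + 1) := by ring
      _ = (e : ℝ) * (η ^ (e + 1) / ((e + 1 : ℕ) : ℝ) ^ (e + 1)) := by rw [h1]
      _ < ((e + 1 : ℕ) : ℝ) ^ (e + 1) * (η ^ (e + 1) / ((e + 1 : ℕ) : ℝ) ^ (e + 1)) := by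
          apply mul_lt_mul_of_pos_right h2
          positivity
      _ = η ^ (e + 1) := by field_simp
  linarith

set_option maxHeartbeats 1000000 in
lemma admissible_dual {d : ℕ} (T : Matrix (Fin d) (Fin d) ℝ) (hT : IsUnit T.det)
    (h : Admissible T) : Admissible (T⁻¹)ᵀ := by
  obtain ⟨δ, hδ, hadm⟩ := h
  rcases Nat.eq_zero_or_pos d with hd | hd
  · subst hd
    exact ⟨1, one_pos, fun k hk => absurd (funext fun i => i.elim0) hk⟩
  obtain ⟨e, rfl⟩ : ∃ e, d = e + 1 := ⟨d - 1, by omega⟩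
  set η := min δ 1 with hηdef
  have hη : 0 < η := lt_min hδ one_pos
  have hη1 : η ≤ 1 := min_le_right _ _
  have hηδ : η ^ (e + 1) ≤ δ := by
    calc η ^ (e + 1) ≤ η ^ 1 := pow_le_pow_of_le_one hη.le hη1 (by omega)
      _ = η := pow_one η
      _ ≤ δ := min_le_left _ _
  set c : Fin (e + 1) → ℝ := fun i => ∑ jj, |T i jj| with hc
  have hcpos : ∀ i, 0 < c i := by
    intro i
    have h0 : 0 ≤ c i := Finset.sum_nonneg fun jj _ => abs_nonneg (T i jj)
    rcases h0.lt_or_eq with hlt | heq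
    · exact hlt
    exfalso
    have hrow : ∀ jj, T i jj = 0 := by
      intro jj
      have := (Finset.sum_eq_zero_iff_of_nonneg (fun jj _ => abs_nonneg (T i jj))).1
        heq.symm jj (Finset.mem_univ jj)
      exact abs_eq_zero.1 this
    have hdet0 : T.det = 0 := Matrix.det_eq_zero_of_row_eq_zero i hrow
    rw [hdet0] at hT
    exact (by norm_num : ¬ IsUnit (0 : ℝ)) hT
  set γT := ∏ i, c i with hγT
  have hγTpos : 0 < γT := Finset.prod_pos fun i _ => hcpos i
  have hdc : (0 : ℝ) < ((e + 1 : ℕ) : ℝ) := by positivity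
  have hη'pos : 0 < η / ((e + 1 : ℕ) : ℝ) := div_pos hη hdc
  have hRpos : 0 < R0 (e + 1) η γT := by
    have h1 : 2 * (e + 1) - 1 = 2 * e + 1 := by omega
    have h2 : (e + 1) - 1 = e := by omega
    rw [R0, h1, h2]
    have h3 : 0 < 2 * 4 ^ (2 * e + 1) * γT / (η / ((e + 1 : ℕ) : ℝ)) ^ e := by positivity
    linarith
  set ε := eps0 (e + 1) η γT with hεdef
  have hεpos : 0 < ε := by
    rw [hεdef, eps0]
    apply div_pos one_pos
    have : (0:ℝ) < 4 * ((e + 1 : ℕ) : ℝ) := by positivity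
    exact mul_pos this hRpos
  refine ⟨ε ^ (e + 1), pow_pos hεpos _, ?_⟩
  intro k₀ hk₀
  by_contra hcon
  push_neg at hcon
  set y := ((T⁻¹)ᵀ).mulVec (fun jj => (k₀ jj : ℝ)) with hy
  have hcont : Continuous fun κ : ℝ => ∏ i, (|y i| + κ) :=
    continuous_finset_prod _ fun i _ => continuous_const.add continuous_id
  have hopen : IsOpen {κ : ℝ | ∏ i, (|y i| + κ) < ε ^ (e + 1)} :=
    isOpen_lt hcont continuous_const
  have h0mem : (0 : ℝ) ∈ {κ : ℝ | ∏ i, (|y i| + κ) < ε ^ (e + 1)} := by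
    simpa using hcon
  obtain ⟨r, hr, hball⟩ := Metric.isOpen_iff.1 hopen 0 h0mem
  have hκmem : ∏ i, (|y i| + r / 2) < ε ^ (e + 1) := by
    have : r / 2 ∈ Metric.ball (0 : ℝ) r := by
      rw [Metric.mem_ball, Real.dist_eq, sub_zero, abs_of_pos (by linarith)]
      linarith
    exact hball this
  set κ := r / 2 with hκdef
  have hκpos : 0 < κ := by rw [hκdef]; linarith
  set j₀ : Fin (e + 1) := ⟨0, Nat.succ_pos e⟩ with hj₀
  set s : Fin (e + 1) → ℝ := fun i =>
    if i = j₀ then (∏ i' ∈ Finset.univ.erase j₀, ((|y i'| + κ) / ε))⁻¹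
    else (|y i| + κ) / ε with hs
  have hQpos : 0 < ∏ i' ∈ Finset.univ.erase j₀, ((|y i'| + κ) / ε) :=
    Finset.prod_pos fun i _ =>
      div_pos (add_pos_of_nonneg_of_pos (abs_nonneg _) hκpos) hεpos
  have hsprod_erase : ∏ i' ∈ Finset.univ.erase j₀, s i'
      = ∏ i' ∈ Finset.univ.erase j₀, ((|y i'| + κ) / ε) :=
    Finset.prod_congr rfl fun i hi => by
      rw [hs]; exact if_neg (Finset.ne_of_mem_erase hi)
  have hspos : ∀ i, 0 < s i := by
    intro i
    rw [hs]
    dsimp only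
    split
    · exact inv_pos.2 hQpos
    · exact div_pos (add_pos_of_nonneg_of_pos (abs_nonneg _) hκpos) hεpos
  have hsone : ∏ i, s i = 1 := by
    rw [← Finset.mul_prod_erase Finset.univ s (Finset.mem_univ j₀), hsprod_erase]
    have hsj : s j₀ = (∏ i' ∈ Finset.univ.erase j₀, ((|y i'| + κ) / ε))⁻¹ := by
      rw [hs]; exact if_pos rfl
    rw [hsj]
    exact inv_mul_cancel₀ hQpos.ne'
  have hys : ∀ i, |y i| < ε * s i := by
    intro i
    rw [hs]
    dsimp only
    split_ifs with hij
    · subst hij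
      rw [← div_eq_mul_inv, lt_div_iff₀ hQpos]
      have hQe : ∏ i' ∈ Finset.univ.erase j₀, ((|y i'| + κ) / ε)
          = (∏ i' ∈ Finset.univ.erase j₀, (|y i'| + κ)) / ε ^ e := by
        rw [Finset.prod_div_distrib, Finset.prod_const,
          Finset.card_erase_of_mem (Finset.mem_univ j₀), Finset.card_univ, Fintype.card_fin]
        norm_num
      rw [hQe]
      have hrw : |y j₀| * ((∏ i' ∈ Finset.univ.erase j₀, (|y i'| + κ)) / ε ^ e)
          = |y j₀| * (∏ i' ∈ Finset.univ.erase j₀, (|y i'| + κ)) / ε ^ e := by ring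
      rw [hrw, div_lt_iff₀ (pow_pos hεpos e)]
      calc |y j₀| * ∏ i' ∈ Finset.univ.erase j₀, (|y i'| + κ)
          ≤ (|y j₀| + κ) * ∏ i' ∈ Finset.univ.erase j₀, (|y i'| + κ) := by
            apply mul_le_mul_of_nonneg_right (by linarith)
            exact Finset.prod_nonneg fun i' _ =>
              add_nonneg (abs_nonneg _) hκpos.le
        _ = ∏ i', (|y i'| + κ) :=
            Finset.mul_prod_erase Finset.univ (fun i' => |y i'| + κ) (Finset.mem_univ j₀)
        _ < ε ^ (e + 1) := hκmem
        _ = ε * ε ^ e := by rw [pow_succ]; ring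
    · have hrw : ε * ((|y i| + κ) / ε) = |y i| + κ := by field_simp
      rw [hrw]
      linarith
  set z : Fin (e + 1) → ℝ := fun i => y i / s i with hz
  obtain ⟨j, _, hjmax⟩ :=
    Finset.exists_max_image Finset.univ (fun i => |z i|) ⟨j₀, Finset.mem_univ _⟩
  have hyne : y ≠ 0 := by
    intro hy0
    apply hk₀
    have hTy : (Tᵀ).mulVec y = fun jj => (k₀ jj : ℝ) := by
      rw [hy, Matrix.mulVec_mulVec]
      have hmul : Tᵀ * (T⁻¹)ᵀ = 1 := by
        rw [← Matrix.transpose_mul, Matrix.nonsing_inv_mul T hT, Matrix.transpose_one]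
      rw [hmul, Matrix.one_mulVec]
    rw [hy0] at hTy
    have hk0 : ∀ jj, (k₀ jj : ℝ) = 0 := by
      intro jj
      rw [← congr_fun hTy jj, Matrix.mulVec_zero]
      rfl
    funext jj
    exact_mod_cast hk0 jj
  have hjpos : 0 < |z j| := by
    have hex : ∃ i, y i ≠ 0 := by
      by_contra hno
      push_neg at hno
      exact hyne (funext hno)
    obtain ⟨i, hi⟩ := hex
    have h1 : 0 < |z i| := abs_pos.2 (by
      rw [hz]
      exact div_ne_zero hi (hspos i).ne')
    exact lt_of_lt_of_le h1 (hjmax i (Finset.mem_univ i))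
  set G : (Fin (e + 1) → ℤ) → (Fin (e + 1) → ℝ) :=
    fun mm i => s i * (T.mulVec (fun jj => (mm jj : ℝ))) i with hG
  have hCprod : ∏ i, (s i * c i) = γT := by
    rw [Finset.prod_mul_distrib, hsone, one_mul]
  apply core e δ η hη hηδ (fun i => s i * c i) (fun i => mul_pos (hspos i) (hcpos i)) G
    ?_ ?_ ?_ z j (fun i => hjmax i (Finset.mem_univ i)) hjpos ?_ ?_
  · -- hGsub
    intro a b
    funext i
    rw [hG]
    dsimp only
    have hcast : (fun jj => (((a - b) jj : ℤ) : ℝ))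
        = (fun jj => ((a jj : ℤ) : ℝ)) - (fun jj => ((b jj : ℤ) : ℝ)) := by
      funext jj
      simp [Pi.sub_apply]
    rw [hcast, Matrix.mulVec_sub]
    simp [Pi.sub_apply]
    ring
  · -- hGbound
    intro mm M hM hMb i
    rw [hG]
    dsimp only
    rw [abs_mul, abs_of_pos (hspos i)]
    have hX : |(T.mulVec (fun jj => ((mm jj : ℤ) : ℝ))) i| ≤ c i * M := by
      rw [Matrix.mulVec, dotProduct]
      calc |∑ jj, T i jj * ((mm jj : ℤ) : ℝ)| ≤ ∑ jj, |T i jj * ((mm jj : ℤ) : ℝ)| :=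
            Finset.abs_sum_le_sum_abs _ _
        _ ≤ ∑ jj, |T i jj| * M := by
            apply Finset.sum_le_sum
            intro jj _
            rw [abs_mul]
            exact mul_le_mul_of_nonneg_left (hMb jj) (abs_nonneg _)
        _ = c i * M := by rw [hc, ← Finset.sum_mul]
    calc s i * |(T.mulVec (fun jj => ((mm jj : ℤ) : ℝ))) i| ≤ s i * (c i * M) :=
          mul_le_mul_of_nonneg_left hX (hspos i).le
      _ = s i * c i * M := by ring
  · -- hsep
    intro mm hmm
    have hprod : ∏ i, |G mm i| = ∏ i, |(T.mulVec (fun jj => ((mm jj : ℤ) : ℝ))) i| := by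
      calc ∏ i, |G mm i|
          = ∏ i, (s i * |(T.mulVec (fun jj => ((mm jj : ℤ) : ℝ))) i|) := by
            apply Finset.prod_congr rfl
            intro i _
            rw [hG]
            dsimp only
            rw [abs_mul, abs_of_pos (hspos i)]
        _ = (∏ i, s i) * ∏ i, |(T.mulVec (fun jj => ((mm jj : ℤ) : ℝ))) i| :=
            Finset.prod_mul_distrib
        _ = ∏ i, |(T.mulVec (fun jj => ((mm jj : ℤ) : ℝ))) i| := by rw [hsone, one_mul]
    rw [hprod]
    exact hadm mm hmm
  · -- hz
    intro i
    rw [hCprod]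
    rw [hz]
    dsimp only
    rw [abs_div, abs_of_pos (hspos i), div_lt_iff₀ (hspos i)]
    exact hys i
  · -- hpair
    intro mm
    refine ⟨∑ i, mm i * k₀ i, ?_⟩
    have hstep1 : ∑ i, G mm i * z i
        = ∑ i, (T.mulVec (fun jj => ((mm jj : ℤ) : ℝ))) i * y i := by
      apply Finset.sum_congr rfl
      intro i _
      rw [hG, hz]
      dsimp only
      field_simp
      rw [mul_assoc, mul_div_cancel_left₀ _ (hspos i).ne']
    rw [hstep1]
    have hdot : ∑ i, (T.mulVec (fun jj => ((mm jj : ℤ) : ℝ))) i * y i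
        = (T.mulVec (fun jj => ((mm jj : ℤ) : ℝ))) ⬝ᵥ y := rfl
    rw [hdot, hy, Matrix.dotProduct_mulVec, Matrix.vecMul_transpose, Matrix.mulVec_mulVec,
      Matrix.nonsing_inv_mul T hT, Matrix.one_mulVec]
    rw [dotProduct]
    push_cast
    rfl

/-- Let `T` be an invertible real `d × d` matrix. Then the lattice `T(ℤ^d)` is admissible if
and only if its dual lattice, generated by `(T⁻¹)ᵀ`, is admissible. -/
theorem admissible_iff_dual_admissible (d : ℕ) (T : Matrix (Fin d) (Fin d) ℝ)
    (hT : IsUnit T.det) : Admissible T ↔ Admissible (T⁻¹)ᵀ := by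
  constructor
  · exact admissible_dual T hT
  · intro h
    have hdet : IsUnit ((T⁻¹)ᵀ).det := by
      rw [Matrix.det_transpose]
      exact Matrix.isUnit_nonsing_inv_det T hT
    have hTT : (((T⁻¹)ᵀ)⁻¹)ᵀ = T := by
      rw [← Matrix.transpose_nonsing_inv, Matrix.transpose_transpose,
        Matrix.nonsing_inv_nonsing_inv T hT]
    have := admissible_dual ((T⁻¹)ᵀ) hdet h
    rwa [hTT] at this
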